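/- arXiv:2102.08668 — 4 statements merged into one kernel-verified Lean document; each statement's English description precedes it below -/
import Mathlib

section
/- Let X and G be random vectors in a finite-dimensional inner product space H, let Σ be a positive semi-definite operator on H with eigenpairs (λ_j, v_j), and for δ > 0 let Π_δ (resp. Π_δ^⊥) be the orthogonal projection onto the span of eigenvectors with λ_j ≤ δ (resp. its complement). If G ~ N(0, Σ) and E‖Π_δ X‖² ≤ δ·dim(H), then W₂²(X, G) ≤ W₂²(Π_δ^⊥ X, Π_δ^⊥ G) + 4·dim(H)·δ. -/
/-!
Glue an arbitrary coupling `π` of `(Π_δ^⊥ X, Π_δ^⊥ G)` with the conditional laws of `X` given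
`Π_δ^⊥ X` and of `G` given `Π_δ^⊥ G`: this gives a coupling `γ` of `(X, G)` under which the
`Π_δ^⊥`-components are distributed as `π`. Splitting `x - g` orthogonally,
`‖x - g‖² ≤ ‖Π_δ^⊥ x - Π_δ^⊥ g‖² + 2‖Π_δ x‖² + 2‖Π_δ g‖²`, so the cost of `γ` exceeds that of `π`
by at most `2 E‖Π_δ X‖² + 2 E‖Π_δ G‖²`. Both terms are at most `δ·dim H`: the first by assumption,
the second because `E‖Π_δ G‖² = ∑_{λ_j ≤ δ} λ_j`.
-/

open MeasureTheory ProbabilityTheory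
open scoped RealInnerProductSpace

/-- Squared 2-Wasserstein distance between two laws on a normed space,
defined as the infimum over couplings of `E‖X − Y‖²`. -/
noncomputable def W2sq {H : Type*} [NormedAddCommGroup H] [MeasurableSpace H]
    (μ ν : Measure H) : ℝ :=
  sInf { r | ∃ π : Measure (H × H), IsProbabilityMeasure π ∧
    π.map Prod.fst = μ ∧ π.map Prod.snd = ν ∧ r = ∫ p, ‖p.1 - p.2‖ ^ 2 ∂π }

open scoped NNReal

section Gluing

variable {α β α' β' : Type*} [MeasurableSpace α] [MeasurableSpace β]
  [MeasurableSpace α'] [MeasurableSpace β']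

lemma map_fst_parallelComp_comp (π : Measure (α' × β')) (κ : Kernel α' α) (η : Kernel β' β)
    [IsSFiniteKernel κ] [IsMarkovKernel η] :
    ((κ ∥ₖ η) ∘ₘ π).map Prod.fst = κ ∘ₘ π.map Prod.fst := by
  have hfst : (κ ∥ₖ η).map Prod.fst = κ.comap Prod.fst measurable_fst := by
    ext1 p
    rw [Kernel.map_apply _ measurable_fst, Kernel.parallelComp_apply, Kernel.comap_apply,
      Measure.map_fst_prod, measure_univ, one_smul]
  rw [Measure.map_comp _ _ measurable_fst, hfst, ← Kernel.comp_deterministic_eq_comap,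
    ← Measure.comp_assoc, Measure.deterministic_comp_eq_map]

lemma map_snd_parallelComp_comp (π : Measure (α' × β')) (κ : Kernel α' α) (η : Kernel β' β)
    [IsMarkovKernel κ] [IsSFiniteKernel η] :
    ((κ ∥ₖ η) ∘ₘ π).map Prod.snd = η ∘ₘ π.map Prod.snd := by
  have hsnd : (κ ∥ₖ η).map Prod.snd = η.comap Prod.snd measurable_snd := by
    ext1 p
    rw [Kernel.map_apply _ measurable_snd, Kernel.parallelComp_apply, Kernel.comap_apply,
      Measure.map_snd_prod, measure_univ, one_smul]
  rw [Measure.map_comp _ _ measurable_snd, hsnd, ← Kernel.comp_deterministic_eq_comap,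
    ← Measure.comp_assoc, Measure.deterministic_comp_eq_map]

lemma ae_condDistrib_id_map_eq_dirac [StandardBorelSpace α] [Nonempty α] [MeasurableEq α']
    {μ : Measure α} [IsFiniteMeasure μ] {f : α → α'} (hf : Measurable f) :
    ∀ᵐ y ∂(μ.map f), (condDistrib id f μ y).map f = Measure.dirac y := by
  have hfiber : ∀ᵐ y ∂(μ.map f), ∀ᵐ x ∂(condDistrib id f μ y), f x = y := by
    refine Measure.ae_ae_of_ae_compProd (p := fun p : α' × α => f p.2 = p.1) ?_
    rw [compProd_map_condDistrib aemeasurable_id]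
    exact (ae_map_iff (hf.prodMk measurable_id).aemeasurable
      (measurableSet_eq_fun (hf.comp measurable_snd) measurable_fst)).mpr
      (Filter.Eventually.of_forall fun _ => rfl)
  filter_upwards [hfiber] with y hy
  rw [Measure.map_congr hy, Measure.map_const, measure_univ, one_smul]

/-- The gluing lemma, through the conditional laws of `μ` given `f` and of `ν` given `g`. -/
theorem exists_coupling_map_prodMap_eq [StandardBorelSpace α] [Nonempty α]
    [StandardBorelSpace β] [Nonempty β] [MeasurableEq α'] [MeasurableEq β']
    {μ : Measure α} {ν : Measure β} [IsFiniteMeasure μ] [IsFiniteMeasure ν]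
    {f : α → α'} {g : β → β'} (hf : Measurable f) (hg : Measurable g)
    {π : Measure (α' × β')} [IsProbabilityMeasure π]
    (hπ₁ : π.map Prod.fst = μ.map f) (hπ₂ : π.map Prod.snd = ν.map g) :
    ∃ γ : Measure (α × β), IsProbabilityMeasure γ ∧ γ.map Prod.fst = μ ∧
      γ.map Prod.snd = ν ∧ γ.map (Prod.map f g) = π := by
  set κ := condDistrib id f μ
  set η := condDistrib id g ν
  refine ⟨(κ ∥ₖ η) ∘ₘ π, inferInstance, ?_, ?_, ?_⟩
  · rw [map_fst_parallelComp_comp, hπ₁, condDistrib_comp_map hf.aemeasurable aemeasurable_id,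
      Measure.map_id]
  · rw [map_snd_parallelComp_comp, hπ₂, condDistrib_comp_map hg.aemeasurable aemeasurable_id,
      Measure.map_id]
  · have hκ := ae_condDistrib_id_map_eq_dirac (μ := μ) hf
    have hη := ae_condDistrib_id_map_eq_dirac (μ := ν) hg
    rw [← hπ₁] at hκ
    rw [← hπ₂] at hη
    rw [Measure.map_comp _ _ (hf.prodMap hg)]
    refine (Measure.comp_congr (η := Kernel.id) ?_).trans Measure.id_comp
    filter_upwards [ae_of_ae_map measurable_fst.aemeasurable hκ,
      ae_of_ae_map measurable_snd.aemeasurable hη] with p hp₁ hp₂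
    rw [Kernel.map_apply _ (hf.prodMap hg), Kernel.parallelComp_apply,
      ← Measure.map_prod_map _ _ hf hg, hp₁, hp₂, Measure.dirac_prod_dirac, Kernel.id_apply]

end Gluing

section OrthogonalSplitting

variable {E : Type*} [NormedAddCommGroup E] [InnerProductSpace ℝ E] {P Q : E →L[ℝ] E}

lemma norm_sq_eq_norm_sq_add_norm_sq_of_orthogonal (hPQ : ∀ u, P u + Q u = u)
    (horth : ∀ u w, ⟪P u, Q w⟫ = 0) (u : E) : ‖u‖ ^ 2 = ‖P u‖ ^ 2 + ‖Q u‖ ^ 2 := by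
  conv_lhs => rw [← hPQ u]
  rw [norm_add_sq_real, horth]
  ring

lemma norm_apply_le_of_orthogonal (hPQ : ∀ u, P u + Q u = u)
    (horth : ∀ u w, ⟪P u, Q w⟫ = 0) (u : E) : ‖P u‖ ≤ ‖u‖ := by
  refine (sq_le_sq₀ (norm_nonneg _) (norm_nonneg _)).mp ?_
  rw [norm_sq_eq_norm_sq_add_norm_sq_of_orthogonal hPQ horth u]
  exact le_add_of_nonneg_right (sq_nonneg _)

lemma norm_sub_sq_le_of_orthogonal (hPQ : ∀ u, P u + Q u = u)
    (horth : ∀ u w, ⟪P u, Q w⟫ = 0) (x y : E) :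
    ‖x - y‖ ^ 2 ≤ ‖Q x - Q y‖ ^ 2 + 2 * ‖P x‖ ^ 2 + 2 * ‖P y‖ ^ 2 := by
  have hP : ‖P (x - y)‖ ^ 2 ≤ 2 * (‖P x‖ ^ 2 + ‖P y‖ ^ 2) :=
    calc ‖P (x - y)‖ ^ 2 ≤ (‖P x‖ + ‖P y‖) ^ 2 := by
          rw [map_sub]; gcongr; exact norm_sub_le _ _
      _ ≤ _ := add_sq_le
  rw [norm_sq_eq_norm_sq_add_norm_sq_of_orthogonal hPQ horth, map_sub Q]
  linarith

lemma norm_apply_sq_le_of_orthogonal (hPQ : ∀ u, P u + Q u = u)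
    (horth : ∀ u w, ⟪P u, Q w⟫ = 0) (x y : E) :
    ‖P x‖ ^ 2 ≤ 2 * ‖x - y‖ ^ 2 + 2 * ‖P y‖ ^ 2 :=
  calc ‖P x‖ ^ 2 ≤ (‖x - y‖ + ‖P y‖) ^ 2 := by
        gcongr
        calc ‖P x‖ = ‖P (x - y) + P y‖ := by rw [map_sub, sub_add_cancel]
          _ ≤ ‖P (x - y)‖ + ‖P y‖ := norm_add_le _ _
          _ ≤ ‖x - y‖ + ‖P y‖ := by gcongr; exact norm_apply_le_of_orthogonal hPQ horth _
    _ ≤ 2 * ‖x - y‖ ^ 2 + 2 * ‖P y‖ ^ 2 := by linarith [add_sq_le (a := ‖x - y‖) (b := ‖P y‖)]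

lemma integral_norm_sub_sq_le_of_orthogonal [MeasurableSpace E] [BorelSpace E]
    [SecondCountableTopology E] (hPQ : ∀ u, P u + Q u = u) (horth : ∀ u w, ⟪P u, Q w⟫ = 0)
    {γ : Measure (E × E)} (hP₂ : Integrable (fun p => ‖P p.2‖ ^ 2) γ) :
    ∫ p, ‖p.1 - p.2‖ ^ 2 ∂γ ≤ ∫ p, ‖Q p.1 - Q p.2‖ ^ 2 ∂γ + 2 * ∫ p, ‖P p.1‖ ^ 2 ∂γ
      + 2 * ∫ p, ‖P p.2‖ ^ 2 ∂γ := by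
  by_cases hf : Integrable (fun p => ‖p.1 - p.2‖ ^ 2) γ
  · have hQ : Integrable (fun p => ‖Q p.1 - Q p.2‖ ^ 2) γ := by
      refine hf.mono' (by fun_prop) (ae_of_all _ fun p => ?_)
      rw [Real.norm_of_nonneg (sq_nonneg _), ← map_sub]
      gcongr
      exact norm_apply_le_of_orthogonal (fun u => by rw [add_comm]; exact hPQ u)
        (fun u w => by rw [real_inner_comm]; exact horth w u) _
    have hP₁ : Integrable (fun p => ‖P p.1‖ ^ 2) γ := by
      refine ((hf.const_mul 2).add (hP₂.const_mul 2)).mono' (by fun_prop)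
        (ae_of_all _ fun p => ?_)
      rw [Real.norm_of_nonneg (sq_nonneg _)]
      exact norm_apply_sq_le_of_orthogonal hPQ horth _ _
    calc ∫ p, ‖p.1 - p.2‖ ^ 2 ∂γ
        ≤ ∫ p, (‖Q p.1 - Q p.2‖ ^ 2 + 2 * ‖P p.1‖ ^ 2 + 2 * ‖P p.2‖ ^ 2) ∂γ :=
          integral_mono hf ((hQ.add (hP₁.const_mul 2)).add (hP₂.const_mul 2))
            fun p => norm_sub_sq_le_of_orthogonal hPQ horth p.1 p.2
      _ = _ := by
          rw [integral_add _ (hP₂.const_mul 2), integral_add hQ (hP₁.const_mul 2),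
            integral_const_mul, integral_const_mul]
          exact hQ.add (hP₁.const_mul 2)
  -- a non-integrable cost has Bochner integral `0`
  · rw [integral_undef hf]
    positivity

end OrthogonalSplitting

namespace OrthonormalBasis

variable {ι E : Type*} [Fintype ι] [NormedAddCommGroup E] [InnerProductSpace ℝ E]
  (b : OrthonormalBasis ι ℝ E) (s : Finset ι)

lemma sum_inner_smul_add_sum_compl [DecidableEq ι] (x : E) :
    ∑ j ∈ s, ⟪b j, x⟫ • b j + ∑ j ∈ sᶜ, ⟪b j, x⟫ • b j = x := by
  rw [Finset.sum_add_sum_compl, b.sum_repr']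

lemma inner_sum_inner_smul_sum_compl [DecidableEq ι] (x y : E) :
    ⟪∑ j ∈ s, ⟪b j, x⟫ • b j, ∑ j ∈ sᶜ, ⟪b j, y⟫ • b j⟫ = 0 := by
  simp_rw [sum_inner, inner_sum, real_inner_smul_left, real_inner_smul_right]
  refine Finset.sum_eq_zero fun i hi => Finset.sum_eq_zero fun j hj => ?_
  rw [b.orthonormal.inner_eq_zero (ne_of_mem_of_not_mem hi (Finset.mem_compl.mp hj)), mul_zero,
    mul_zero]

lemma norm_sum_inner_smul_sq (x : E) :
    ‖∑ j ∈ s, ⟪b j, x⟫ • b j‖ ^ 2 = ∑ j ∈ s, ⟪b j, x⟫ ^ 2 := by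
  rw [← real_inner_self_eq_norm_sq, b.orthonormal.inner_sum]
  simp [sq]

end OrthonormalBasis

section Gaussian

lemma integral_sq_gaussianReal_zero (v : ℝ≥0) : ∫ x, x ^ 2 ∂gaussianReal 0 v = v := by
  rw [← variance_fun_id_gaussianReal (μ := 0) (v := v),
    variance_of_integral_eq_zero aemeasurable_id' integral_id_gaussianReal]

lemma integrable_and_integral_sq_of_map_eq_gaussianReal {Ω : Type*} [MeasurableSpace Ω]
    {P : Measure Ω} {Y : Ω → ℝ} (hY : Measurable Y) {v : ℝ≥0}
    (hYlaw : P.map Y = gaussianReal 0 v) :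
    Integrable (fun ω => Y ω ^ 2) P ∧ ∫ ω, Y ω ^ 2 ∂P = v := by
  have hsq : Integrable (fun x : ℝ => x ^ 2) (P.map Y) := by
    rw [hYlaw]; exact (memLp_id_gaussianReal 2).integrable_sq
  refine ⟨(integrable_map_measure hsq.aestronglyMeasurable hY.aemeasurable).mp hsq, ?_⟩
  rw [← integral_map hY.aemeasurable hsq.aestronglyMeasurable, hYlaw,
    integral_sq_gaussianReal_zero]

lemma integrable_and_integral_norm_sum_inner_smul_sq_of_gaussian
    {ι E Ω : Type*} [Fintype ι] [NormedAddCommGroup E] [InnerProductSpace ℝ E]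
    [MeasurableSpace E] [OpensMeasurableSpace E] [MeasurableSpace Ω] {P : Measure Ω}
    (b : OrthonormalBasis ι ℝ E) {lam : ι → ℝ} (hlam : ∀ j, 0 ≤ lam j) {G : Ω → E}
    (hG : Measurable G)
    (hGlaw : ∀ v : E, P.map (fun ω => ⟪v, G ω⟫)
      = gaussianReal 0 (∑ j, lam j * ⟪b j, v⟫ ^ 2).toNNReal)
    (s : Finset ι) :
    Integrable (fun ω => ‖∑ j ∈ s, ⟪b j, G ω⟫ • b j‖ ^ 2) P ∧
      ∫ ω, ‖∑ j ∈ s, ⟪b j, G ω⟫ • b j‖ ^ 2 ∂P = ∑ j ∈ s, lam j := by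
  have hcoord : ∀ j, Integrable (fun ω => ⟪b j, G ω⟫ ^ 2) P ∧
      ∫ ω, ⟪b j, G ω⟫ ^ 2 ∂P = lam j := by
    intro j
    have hvar : ∑ k, lam k * ⟪b k, b j⟫ ^ 2 = lam j := by
      classical
      simp [orthonormal_iff_ite.mp b.orthonormal]
    have h := integrable_and_integral_sq_of_map_eq_gaussianReal
      ((continuous_const.inner continuous_id).measurable.comp hG) (hGlaw (b j))
    rwa [hvar, Real.coe_toNNReal _ (hlam j)] at h
  simp_rw [b.norm_sum_inner_smul_sq]
  exact ⟨integrable_finsetSum s fun j _ => (hcoord j).1,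
    (integral_finsetSum s fun j _ => (hcoord j).1).trans
      (Finset.sum_congr rfl fun j _ => (hcoord j).2)⟩

lemma sum_filter_le_le_mul_card {ι : Type*} [Fintype ι] (lam : ι → ℝ) {δ : ℝ} (hδ : 0 ≤ δ) :
    ∑ j ∈ Finset.univ.filter (fun j => lam j ≤ δ), lam j ≤ δ * Fintype.card ι :=
  calc ∑ j ∈ Finset.univ.filter (fun j => lam j ≤ δ), lam j
      ≤ (Finset.univ.filter (fun j => lam j ≤ δ)).card • δ :=
        Finset.sum_le_card_nsmul _ _ _ fun j hj => (Finset.mem_filter.mp hj).2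
    _ ≤ δ * Fintype.card ι := by
        rw [nsmul_eq_mul, mul_comm]
        gcongr
        exact Finset.card_le_univ _

end Gaussian

section Wasserstein

lemma W2sq_le_add_of_forall_coupling {E : Type*} [NormedAddCommGroup E] [MeasurableSpace E]
    {μ ν μ' ν' : Measure E} [IsProbabilityMeasure μ'] [IsProbabilityMeasure ν'] {c : ℝ}
    (h : ∀ π : Measure (E × E), IsProbabilityMeasure π → π.map Prod.fst = μ' →
      π.map Prod.snd = ν' → ∃ γ : Measure (E × E), IsProbabilityMeasure γ ∧
        γ.map Prod.fst = μ ∧ γ.map Prod.snd = ν ∧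
        ∫ p, ‖p.1 - p.2‖ ^ 2 ∂γ ≤ ∫ p, ‖p.1 - p.2‖ ^ 2 ∂π + c) :
    W2sq μ ν ≤ W2sq μ' ν' + c := by
  have hne : { r | ∃ π : Measure (E × E), IsProbabilityMeasure π ∧ π.map Prod.fst = μ' ∧
      π.map Prod.snd = ν' ∧ r = ∫ p, ‖p.1 - p.2‖ ^ 2 ∂π }.Nonempty :=
    ⟨_, μ'.prod ν', inferInstance, by simp [Measure.map_fst_prod],
      by simp [Measure.map_snd_prod], rfl⟩
  have hbdd : BddBelow { r | ∃ π : Measure (E × E), IsProbabilityMeasure π ∧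
      π.map Prod.fst = μ ∧ π.map Prod.snd = ν ∧ r = ∫ p, ‖p.1 - p.2‖ ^ 2 ∂π } :=
    ⟨0, by rintro _ ⟨π, -, -, -, rfl⟩; exact integral_nonneg fun p => sq_nonneg _⟩
  rw [← sub_le_iff_le_add]
  refine le_csInf hne ?_
  rintro _ ⟨π, hπ, hπ₁, hπ₂, rfl⟩
  obtain ⟨γ, hγ, hγ₁, hγ₂, hcost⟩ := h π hπ hπ₁ hπ₂
  have := csInf_le hbdd ⟨γ, hγ, hγ₁, hγ₂, rfl⟩
  unfold W2sq
  linarith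

theorem W2sq_le_W2sq_map_add_of_orthogonal {E : Type*} [NormedAddCommGroup E]
    [InnerProductSpace ℝ E] [CompleteSpace E] [SecondCountableTopology E] [MeasurableSpace E]
    [BorelSpace E] {P Q : E →L[ℝ] E} (hPQ : ∀ u, P u + Q u = u)
    (horth : ∀ u w, ⟪P u, Q w⟫ = 0) {μ ν : Measure E} [IsProbabilityMeasure μ]
    [IsProbabilityMeasure ν] (hν : Integrable (fun x => ‖P x‖ ^ 2) ν) :
    W2sq μ ν ≤ W2sq (μ.map Q) (ν.map Q) + (2 * ∫ x, ‖P x‖ ^ 2 ∂μ + 2 * ∫ x, ‖P x‖ ^ 2 ∂ν) := by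
  have := Measure.isProbabilityMeasure_map (μ := μ) Q.continuous.aemeasurable
  have := Measure.isProbabilityMeasure_map (μ := ν) Q.continuous.aemeasurable
  refine W2sq_le_add_of_forall_coupling fun π hπ hπ₁ hπ₂ => ?_
  obtain ⟨γ, hγ, hγ₁, hγ₂, hγπ⟩ :=
    exists_coupling_map_prodMap_eq Q.measurable Q.measurable hπ₁ hπ₂
  refine ⟨γ, hγ, hγ₁, hγ₂, ?_⟩
  have hcost : ∫ p, ‖p.1 - p.2‖ ^ 2 ∂π = ∫ p, ‖Q p.1 - Q p.2‖ ^ 2 ∂γ := by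
    rw [← hγπ, integral_map (by fun_prop) (by fun_prop)]
    rfl
  have hμ : ∫ p, ‖P p.1‖ ^ 2 ∂γ = ∫ x, ‖P x‖ ^ 2 ∂μ := by
    rw [← hγ₁, integral_map (by fun_prop) (by fun_prop)]
  have hν' : ∫ p, ‖P p.2‖ ^ 2 ∂γ = ∫ x, ‖P x‖ ^ 2 ∂ν := by
    rw [← hγ₂, integral_map (by fun_prop) (by fun_prop)]
  have hP₂ : Integrable (fun p => ‖P p.2‖ ^ 2) γ := by
    rw [← hγ₂] at hν
    exact (integrable_map_measure (by fun_prop) (by fun_prop)).mp hν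
  have := integral_norm_sub_sq_le_of_orthogonal hPQ horth hP₂
  rw [hcost, ← hμ, ← hν']
  linarith

end Wasserstein

theorem stmt4_general {H : Type*} [NormedAddCommGroup H] [InnerProductSpace ℝ H]
    [FiniteDimensional ℝ H] [MeasurableSpace H] [BorelSpace H]
    {Ω : Type*} [MeasureSpace Ω] [IsProbabilityMeasure (ℙ : Measure Ω)]
    (N : ℕ)
    (b : OrthonormalBasis (Fin N) ℝ H) (lam : Fin N → ℝ) (hlam : ∀ j, 0 ≤ lam j)
    (δ : ℝ) (hδ : 0 < δ)
    (Pd Pdperp : H →L[ℝ] H)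
    (hPd : ∀ x, Pd x = ∑ j ∈ Finset.univ.filter (fun j => lam j ≤ δ), ⟪b j, x⟫ • b j)
    (hPdperp : ∀ x, Pdperp x
      = ∑ j ∈ Finset.univ.filter (fun j => δ < lam j), ⟪b j, x⟫ • b j)
    (X G : Ω → H) (hX : Measurable X) (hG : Measurable G)
    (hGlaw : ∀ v : H, Measure.map (fun ω => ⟪v, G ω⟫) ℙ
      = gaussianReal 0 (Real.toNNReal (∑ j, lam j * ⟪b j, v⟫ ^ 2)))
    (hXproj : ∫ ω, ‖Pd (X ω)‖ ^ 2 ∂ℙ ≤ δ * N) :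
    W2sq (Measure.map X ℙ) (Measure.map G ℙ)
      ≤ W2sq (Measure.map (fun ω => Pdperp (X ω)) ℙ)
          (Measure.map (fun ω => Pdperp (G ω)) ℙ) + 4 * N * δ := by
  set s := Finset.univ.filter (fun j => lam j ≤ δ)
  have hPdperp' : ∀ x, Pdperp x = ∑ j ∈ sᶜ, ⟪b j, x⟫ • b j := fun x => by
    rw [hPdperp, Finset.compl_filter]
    simp_rw [not_le]
  have hPQ : ∀ u, Pd u + Pdperp u = u := fun u => by
    rw [hPd, hPdperp']; exact b.sum_inner_smul_add_sum_compl s u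
  have horth : ∀ u w, ⟪Pd u, Pdperp w⟫ = 0 := fun u w => by
    rw [hPd, hPdperp']; exact b.inner_sum_inner_smul_sum_compl s u w
  obtain ⟨hGint, hGeq⟩ :=
    integrable_and_integral_norm_sum_inner_smul_sq_of_gaussian b hlam hG hGlaw s
  simp_rw [← hPd] at hGint hGeq
  have hGproj : ∫ ω, ‖Pd (G ω)‖ ^ 2 ∂ℙ ≤ δ * N := by
    simpa [hGeq] using sum_filter_le_le_mul_card lam hδ.le
  have := Measure.isProbabilityMeasure_map (μ := ℙ) hX.aemeasurable
  have := Measure.isProbabilityMeasure_map (μ := ℙ) hG.aemeasurable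
  have hW := W2sq_le_W2sq_map_add_of_orthogonal hPQ horth (μ := Measure.map X ℙ)
    ((integrable_map_measure (g := fun x => ‖Pd x‖ ^ 2) (by fun_prop) hG.aemeasurable).mpr
      hGint)
  rw [Measure.map_map Pdperp.measurable hX, Measure.map_map Pdperp.measurable hG,
    integral_map hX.aemeasurable (by fun_prop), integral_map hG.aemeasurable (by fun_prop)] at hW
  simp only [Function.comp_def] at hW
  linarith

/-- discarding the small-eigenvalue directions of the covariance costs at most
`4·dim(H)·δ` in squared 2-Wasserstein distance: if `G ~ N(0,Σ)` (characterized through its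
one-dimensional marginals along the eigenbasis `b` with eigenvalues `lam`),
`Π_δ`/`Π_δ^⊥` are the orthogonal projections onto the eigendirections with `λ_j ≤ δ`
(resp. `λ_j > δ`), and `E‖Π_δ X‖² ≤ δ·dim H`, then
`W₂²(X,G) ≤ W₂²(Π_δ^⊥ X, Π_δ^⊥ G) + 4·dim(H)·δ`. -/
theorem stmt4 {H : Type*} [NormedAddCommGroup H] [InnerProductSpace ℝ H]
    [FiniteDimensional ℝ H] [MeasurableSpace H] [BorelSpace H]
    {Ω : Type*} [MeasureSpace Ω] [IsProbabilityMeasure (ℙ : Measure Ω)]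
    (N : ℕ) (hN : N = Module.finrank ℝ H)
    (b : OrthonormalBasis (Fin N) ℝ H) (lam : Fin N → ℝ) (hlam : ∀ j, 0 ≤ lam j)
    (δ : ℝ) (hδ : 0 < δ)
    (Pd Pdperp : H →L[ℝ] H)
    (hPd : ∀ x, Pd x = ∑ j ∈ Finset.univ.filter (fun j => lam j ≤ δ), ⟪b j, x⟫ • b j)
    (hPdperp : ∀ x, Pdperp x
      = ∑ j ∈ Finset.univ.filter (fun j => δ < lam j), ⟪b j, x⟫ • b j)
    (X G : Ω → H) (hX : Measurable X) (hG : Measurable G)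
    (hGlaw : ∀ v : H, Measure.map (fun ω => ⟪v, G ω⟫) ℙ
      = gaussianReal 0 (Real.toNNReal (∑ j, lam j * ⟪b j, v⟫ ^ 2)))
    (hXproj : ∫ ω, ‖Pd (X ω)‖ ^ 2 ∂ℙ ≤ δ * N) :
    W2sq (Measure.map X ℙ) (Measure.map G ℙ)
      ≤ W2sq (Measure.map (fun ω => Pdperp (X ω)) ℙ)
          (Measure.map (fun ω => Pdperp (G ω)) ℙ) + 4 * N * δ :=
  stmt4_general N b lam hlam δ hδ Pd Pdperp hPd hPdperp X G hX hG hGlaw hXproj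
end

section
/- For odd d = 2ℓ−1, consider the degree-d polynomial q(x) = n^{-ℓ/2} Σ_{i₁,…,i_ℓ=1}^n x_{i₁} x_{i₂}² ⋯ x_{i_ℓ}². For w a standard Gaussian vector in ℝⁿ, Var(q(w)) = Ω(n^{ℓ−1}) = Ω(n^{(d−1)/2}) as n → ∞ (with ℓ fixed). -/
open MeasureTheory ProbabilityTheory

/-- The standard Gaussian measure on `ℝⁿ`. -/
noncomputable def stdGaussianPi (n : ℕ) : Measure (Fin n → ℝ) :=
  Measure.pi fun _ => gaussianReal 0 1

/-!
Write `q = n^{-ℓ/2} Q`. Each monomial of `Q` is odd in the coordinate that enters it linearly and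
the Gaussian is invariant under a sign flip of one coordinate, so `𝔼 Q = 0` and
`Var q = n^{-ℓ} 𝔼 Q²`. Test `Q` against `S = Σ_k x_k`: by Cauchy–Schwarz
`𝔼[Q S]² ≤ 𝔼 Q² · 𝔼 S² = n 𝔼 Q²`. In `Q S` the same sign flips kill every product `x_k · monomial`
except those with `k` the linear index, and these sum to `‖x‖^{2ℓ}`, so by Jensen
`𝔼[Q S] = 𝔼 ‖x‖^{2ℓ} ≥ (𝔼 ‖x‖²)^ℓ = n^ℓ`. Hence `𝔼 Q² ≥ n^{2ℓ-1}` and `Var q ≥ n^{ℓ-1}`.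
-/

open Finset
open scoped NNReal

namespace MeasureTheory

variable {α : Type*} [MeasurableSpace α]

lemma sq_integral_mul_le {μ : Measure α} {f g : α → ℝ} (hf : MemLp f 2 μ) (hg : MemLp g 2 μ) :
    (∫ x, f x * g x ∂μ) ^ 2 ≤ (∫ x, f x ^ 2 ∂μ) * ∫ x, g x ^ 2 ∂μ := by
  have hinner : ∀ {u v : α → ℝ} (hu : MemLp u 2 μ) (hv : MemLp v 2 μ),
      inner ℝ (hu.toLp u) (hv.toLp v) = ∫ x, u x * v x ∂μ := by
    intro u v hu hv
    rw [L2.inner_def]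
    refine integral_congr_ae ?_
    filter_upwards [hu.coeFn_toLp, hv.coeFn_toLp] with x hux hvx
    simp [hux, hvx, mul_comm]
  simpa only [hinner, ← sq] using real_inner_mul_inner_self_le (hf.toLp f) (hg.toLp g)

lemma integral_eq_zero_of_comp_eq_neg {μ : Measure α} {f : α → ℝ} {g : α → α}
    (hg : MeasurePreserving g μ μ) (hf : AEStronglyMeasurable f μ) (hfg : ∀ x, f (g x) = -f x) :
    ∫ x, f x ∂μ = 0 := by
  have h := integral_map (f := f) hg.measurable.aemeasurable (hg.map_eq.symm ▸ hf)
  simp only [hg.map_eq, hfg, integral_neg] at h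
  linarith

def finiteMoments (μ : Measure α) [IsFiniteMeasure μ] : Subalgebra ℝ (α → ℝ) where
  carrier := {f | ∀ p : ℝ≥0, MemLp f p μ}
  mul_mem' {f g} hf hg p := by
    have : ENNReal.HolderTriple (2 * p : ℝ≥0) (2 * p : ℝ≥0) p := by
      rw [ENNReal.holderTriple_iff]
      push_cast
      rw [ENNReal.mul_inv (by simp) (by simp), ← add_mul, ENNReal.inv_two_add_inv_two, one_mul]
    exact (hg (2 * p)).mul (hf (2 * p))
  add_mem' hf hg p := (hf p).add (hg p)
  algebraMap_mem' c _ := memLp_const c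

section finiteMoments

variable {μ : Measure α} [IsFiniteMeasure μ] {f : α → ℝ}

lemma MemLp.of_mem_finiteMoments (hf : f ∈ finiteMoments μ) (p : ℝ≥0) : MemLp f p μ := hf p

lemma Integrable.of_mem_finiteMoments (hf : f ∈ finiteMoments μ) : Integrable f μ :=
  memLp_one_iff_integrable.1 (by exact_mod_cast hf 1)

end finiteMoments

variable {ι : Type*} [Fintype ι] [DecidableEq ι]

lemma measurePreserving_update_neg {μ : ι → Measure ℝ} [∀ i, SigmaFinite (μ i)] {k : ι}
    (hk : (μ k).map Neg.neg = μ k) :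
    MeasurePreserving (fun x => Function.update x k (-x k)) (Measure.pi μ) (Measure.pi μ) := by
  have hreflect : (fun x : ι → ℝ => Function.update x k (-x k)) =
      fun x i => (if i = k then Neg.neg else id) (x i) := by
    ext x i
    by_cases hi : i = k
    · subst hi; simp
    · simp [hi]
  refine ⟨by fun_prop, ?_⟩
  have hmap : ∀ i, (μ i).map (if i = k then Neg.neg else id) = μ i := by
    intro i
    by_cases hi : i = k
    · subst hi; simpa using hk
    · simp [hi]
  rw [hreflect, Measure.pi_map_pi (hμ := fun i => (hmap i).symm ▸ inferInstance)
    (fun i => by split_ifs <;> fun_prop)]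
  simp only [hmap]

end MeasureTheory

lemma update_neg_apply_sq {ι : Type*} [DecidableEq ι] (x : ι → ℝ) (k i : ι) :
    Function.update x k (-x k) i ^ 2 = x i ^ 2 := by
  by_cases hi : i = k
  · subst hi; simp
  · simp [hi]

section Coordinates

variable {n : ℕ}

instance : IsProbabilityMeasure (stdGaussianPi n) := by
  unfold stdGaussianPi; infer_instance

lemma coord_mem_finiteMoments_stdGaussianPi (k : Fin n) :
    (fun x : Fin n → ℝ => x k) ∈ finiteMoments (stdGaussianPi n) :=
  fun p => (memLp_id_gaussianReal p).comp_measurePreserving (measurePreserving_eval _ k)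

lemma sum_coord_mem_finiteMoments_stdGaussianPi :
    (fun x : Fin n → ℝ => ∑ k, x k) ∈ finiteMoments (stdGaussianPi n) := by
  have h : (fun x : Fin n → ℝ => ∑ k, x k) = ∑ k, fun x => x k := by ext x; simp
  rw [h]
  exact Subalgebra.sum_mem _ fun k _ => coord_mem_finiteMoments_stdGaussianPi k

lemma sum_sq_coord_mem_finiteMoments_stdGaussianPi :
    (fun x : Fin n → ℝ => ∑ k, x k ^ 2) ∈ finiteMoments (stdGaussianPi n) := by
  have h : (fun x : Fin n → ℝ => ∑ k, x k ^ 2) = ∑ k, (fun x => x k) ^ 2 := by ext x; simp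
  rw [h]
  exact Subalgebra.sum_mem _ fun k _ =>
    Subalgebra.pow_mem _ (coord_mem_finiteMoments_stdGaussianPi k) 2

lemma measurePreserving_stdGaussianPi_update_neg (k : Fin n) :
    MeasurePreserving (fun x => Function.update x k (-x k)) (stdGaussianPi n) (stdGaussianPi n) :=
  measurePreserving_update_neg (by simpa using gaussianReal_map_neg (μ := 0) (v := 1))

lemma integral_coord_sq_stdGaussianPi (k : Fin n) :
    ∫ x, x k ^ 2 ∂stdGaussianPi n = 1 := by
  rw [stdGaussianPi, integral_comp_eval (f := fun t => t ^ 2) (by fun_prop)]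
  simpa using (variance_of_integral_eq_zero aemeasurable_id
    (integral_id_gaussianReal (μ := 0) (v := 1))).symm

lemma integral_coord_mul_coord_stdGaussianPi (k k' : Fin n) :
    ∫ x, x k * x k' ∂stdGaussianPi n = if k = k' then 1 else 0 := by
  split_ifs with h
  · subst h
    simpa only [← sq] using integral_coord_sq_stdGaussianPi k
  · exact integral_eq_zero_of_comp_eq_neg (measurePreserving_stdGaussianPi_update_neg k)
      (Integrable.of_mem_finiteMoments (Subalgebra.mul_mem _
        (coord_mem_finiteMoments_stdGaussianPi k)
        (coord_mem_finiteMoments_stdGaussianPi k'))).aestronglyMeasurable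
      (fun x => by simp [Function.update_of_ne (Ne.symm h)])

lemma integral_sq_sum_coord_stdGaussianPi :
    ∫ x, (∑ k, x k) ^ 2 ∂stdGaussianPi n = n := by
  have hint : ∀ k k' : Fin n, Integrable (fun x => x k * x k') (stdGaussianPi n) :=
    fun k k' => Integrable.of_mem_finiteMoments (Subalgebra.mul_mem _
      (coord_mem_finiteMoments_stdGaussianPi k) (coord_mem_finiteMoments_stdGaussianPi k'))
  simp_rw [sq, sum_mul_sum]
  rw [integral_finsetSum _ fun k _ => integrable_finsetSum _ fun k' _ => hint k k']
  simp [integral_finsetSum _ fun k' _ => hint _ k', integral_coord_mul_coord_stdGaussianPi]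

lemma integral_sum_sq_coord_stdGaussianPi :
    ∫ x, ∑ k, x k ^ 2 ∂stdGaussianPi n = n := by
  rw [integral_finsetSum _ fun k _ => (Integrable.of_mem_finiteMoments
    (Subalgebra.pow_mem _ (coord_mem_finiteMoments_stdGaussianPi k) 2) :
      Integrable (fun x : Fin n → ℝ => x k ^ 2) _)]
  simp [integral_coord_sq_stdGaussianPi]

lemma pow_le_integral_sum_sq_coord_pow_stdGaussianPi (ℓ : ℕ) :
    (n : ℝ) ^ ℓ ≤ ∫ x, (∑ k, x k ^ 2) ^ ℓ ∂stdGaussianPi n := by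
  have hmem := sum_sq_coord_mem_finiteMoments_stdGaussianPi (n := n)
  have h := (convexOn_pow ℓ).map_integral_le (μ := stdGaussianPi n)
    (continuous_pow ℓ).continuousOn isClosed_Ici
    (ae_of_all _ fun x => Set.mem_Ici.2 (by positivity))
    (Integrable.of_mem_finiteMoments hmem)
    (Integrable.of_mem_finiteMoments (Subalgebra.pow_mem _ hmem ℓ))
  rwa [integral_sum_sq_coord_stdGaussianPi] at h

end Coordinates

section Polynomial

variable {ℓ n : ℕ} (z : Fin ℓ)

noncomputable def qTerm (i : Fin ℓ → Fin n) (x : Fin n → ℝ) : ℝ :=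
  x (i z) * ∏ j ∈ univ.filter (fun j => j ≠ z), x (i j) ^ 2

/-- The paper's `q` without its factor `n ^ (-ℓ/2)`. -/
noncomputable def qPoly (x : Fin n → ℝ) : ℝ :=
  ∑ i : Fin ℓ → Fin n, qTerm z i x

lemma qTerm_update_neg_self (i : Fin ℓ → Fin n) (x : Fin n → ℝ) :
    qTerm z i (Function.update x (i z) (-x (i z))) = -qTerm z i x := by
  simp [qTerm, update_neg_apply_sq]

lemma qTerm_update_neg_of_ne (i : Fin ℓ → Fin n) {k : Fin n} (hk : k ≠ i z) (x : Fin n → ℝ) :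
    qTerm z i (Function.update x k (-x k)) = qTerm z i x := by
  simp [qTerm, update_neg_apply_sq, Function.update_of_ne hk.symm]

lemma coord_mul_qTerm_self (i : Fin ℓ → Fin n) (x : Fin n → ℝ) :
    x (i z) * qTerm z i x = ∏ j, x (i j) ^ 2 := by
  rw [qTerm, ← mul_assoc, ← sq, filter_ne', mul_prod_erase _ (fun j => x (i j) ^ 2) (mem_univ z)]

lemma qTerm_mem_finiteMoments (i : Fin ℓ → Fin n) :
    qTerm z i ∈ finiteMoments (stdGaussianPi n) := by
  have h : qTerm z i = (fun x => x (i z)) * ∏ j ∈ univ.filter (fun j => j ≠ z),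
      (fun x : Fin n → ℝ => x (i j)) ^ 2 := by
    ext x; simp [qTerm, prod_apply]
  rw [h]
  exact Subalgebra.mul_mem _ (coord_mem_finiteMoments_stdGaussianPi _)
    (Subalgebra.prod_mem _ fun j _ =>
      Subalgebra.pow_mem _ (coord_mem_finiteMoments_stdGaussianPi _) 2)

lemma qPoly_mem_finiteMoments : qPoly z ∈ finiteMoments (stdGaussianPi n) := by
  have h : qPoly z = ∑ i : Fin ℓ → Fin n, qTerm z i := by ext x; simp [qPoly]
  rw [h]
  exact Subalgebra.sum_mem _ fun i _ => qTerm_mem_finiteMoments z i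

lemma integral_qTerm (i : Fin ℓ → Fin n) : ∫ x, qTerm z i x ∂stdGaussianPi n = 0 :=
  integral_eq_zero_of_comp_eq_neg (measurePreserving_stdGaussianPi_update_neg (i z))
    (Integrable.of_mem_finiteMoments (qTerm_mem_finiteMoments z i)).aestronglyMeasurable
    (qTerm_update_neg_self z i)

lemma integral_qPoly : ∫ x, qPoly z x ∂stdGaussianPi n = 0 := by
  unfold qPoly
  rw [integral_finsetSum _ fun i _ => Integrable.of_mem_finiteMoments (qTerm_mem_finiteMoments z i)]
  exact sum_eq_zero fun i _ => integral_qTerm z i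

lemma integral_coord_mul_qTerm_of_ne {i : Fin ℓ → Fin n} {k : Fin n} (hk : k ≠ i z) :
    ∫ x, x k * qTerm z i x ∂stdGaussianPi n = 0 :=
  integral_eq_zero_of_comp_eq_neg (measurePreserving_stdGaussianPi_update_neg k)
    (Integrable.of_mem_finiteMoments (Subalgebra.mul_mem _
      (coord_mem_finiteMoments_stdGaussianPi k) (qTerm_mem_finiteMoments z i))).aestronglyMeasurable
    (fun x => by simp [qTerm_update_neg_of_ne z i hk])

lemma integral_qPoly_mul_sum_coord :
    ∫ x, qPoly z x * ∑ k, x k ∂stdGaussianPi n = ∫ x, (∑ c, x c ^ 2) ^ ℓ ∂stdGaussianPi n := by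
  have hexpand : ∀ x : Fin n → ℝ, qPoly z x * ∑ k, x k = ∑ i, ∑ k, x k * qTerm z i x := by
    intro x
    rw [qPoly, sum_mul]
    simp only [mul_sum]
    exact sum_congr rfl fun i _ => sum_congr rfl fun k _ => mul_comm (qTerm z i x) (x k)
  have hint : ∀ i (k : Fin n), Integrable (fun x => x k * qTerm z i x) (stdGaussianPi n) :=
    fun i k => Integrable.of_mem_finiteMoments
      (Subalgebra.mul_mem _ (coord_mem_finiteMoments_stdGaussianPi k) (qTerm_mem_finiteMoments z i))
  simp_rw [hexpand, Fintype.sum_pow, ← coord_mul_qTerm_self z]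
  rw [integral_finsetSum _ fun i _ => integrable_finsetSum _ fun k _ => hint i k,
    integral_finsetSum _ fun i _ => hint i (i z)]
  refine sum_congr rfl fun i _ => ?_
  rw [integral_finsetSum _ fun k _ => hint i k,
    sum_eq_single (i z) (fun k _ hk => integral_coord_mul_qTerm_of_ne z hk) (by simp)]

lemma pow_two_mul_le_mul_integral_qPoly_sq :
    (n : ℝ) ^ (2 * ℓ) ≤ n * ∫ x, qPoly z x ^ 2 ∂stdGaussianPi n :=
  calc (n : ℝ) ^ (2 * ℓ) = ((n : ℝ) ^ ℓ) ^ 2 := by ring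
    _ ≤ (∫ x, qPoly z x * ∑ k, x k ∂stdGaussianPi n) ^ 2 := by
      rw [integral_qPoly_mul_sum_coord]
      exact pow_le_pow_left₀ (by positivity) (pow_le_integral_sum_sq_coord_pow_stdGaussianPi ℓ) 2
    _ ≤ (∫ x, qPoly z x ^ 2 ∂stdGaussianPi n) * ∫ x, (∑ k, x k) ^ 2 ∂stdGaussianPi n :=
      sq_integral_mul_le (MemLp.of_mem_finiteMoments (qPoly_mem_finiteMoments z) 2)
        (MemLp.of_mem_finiteMoments sum_coord_mem_finiteMoments_stdGaussianPi 2)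
    _ = n * ∫ x, qPoly z x ^ 2 ∂stdGaussianPi n := by
      rw [integral_sq_sum_coord_stdGaussianPi, mul_comm]

end Polynomial

/-- for odd `d = 2ℓ−1`, the degree-`d` polynomial
`q(x) = n^{-ℓ/2} Σ_{i₁,…,i_ℓ} x_{i₁} x_{i₂}² ⋯ x_{i_ℓ}²` has variance `Ω(n^{ℓ-1})`
under the standard Gaussian on `ℝⁿ` (as `n → ∞`, with `ℓ` fixed). -/
theorem stmt6 (ℓ : ℕ) (hℓ : 1 ≤ ℓ) :
    ∃ c : ℝ, 0 < c ∧ ∃ N : ℕ, ∀ n ≥ N,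
      variance
        (fun x : Fin n → ℝ => (n : ℝ) ^ (-(ℓ : ℝ) / 2) *
          ∑ i : Fin ℓ → Fin n,
            (x (i ⟨0, hℓ⟩) * ∏ j ∈ Finset.univ.filter (fun j : Fin ℓ => j ≠ ⟨0, hℓ⟩),
              x (i j) ^ 2))
        (stdGaussianPi n)
      ≥ c * (n : ℝ) ^ (ℓ - 1) := by
  refine ⟨1, one_pos, 1, fun n hn => ?_⟩
  set z : Fin ℓ := ⟨0, hℓ⟩
  have hn : (0 : ℝ) < n := by exact_mod_cast hn
  change 1 * (n : ℝ) ^ (ℓ - 1) ≤ variance (fun x => (n : ℝ) ^ (-(ℓ : ℝ) / 2) * qPoly z x) _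
  have hscale : ((n : ℝ) ^ (-(ℓ : ℝ) / 2)) ^ 2 = ((n : ℝ) ^ ℓ)⁻¹ := by
    rw [← Real.rpow_natCast _ 2, ← Real.rpow_mul hn.le, ← Real.rpow_natCast, ← Real.rpow_neg hn.le]
    ring_nf
  have hpow : (n : ℝ) * ((n : ℝ) ^ ℓ * (n : ℝ) ^ (ℓ - 1)) = (n : ℝ) ^ (2 * ℓ) := by
    rw [← pow_add, ← pow_succ']
    congr 1
    omega
  rw [variance_const_mul, variance_of_integral_eq_zero
    (Integrable.of_mem_finiteMoments (qPoly_mem_finiteMoments z)).aemeasurable (integral_qPoly z),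
    hscale, one_mul, le_inv_mul_iff₀ (by positivity)]
  exact le_of_mul_le_mul_left (hpow ▸ pow_two_mul_le_mul_integral_qPoly_sq z) hn
end

section
/- Let d ∈ ℕ, let w be a standard Gaussian vector in ℝⁿ, let P(x) = x^{⊗d} ∈ Sym((ℝⁿ)^{⊗d}), and let Σ = Cov(P(w)). Then the minimal eigenvalue of Σ satisfies λ_min(Σ) ≥ 1/d!. -/
/-!
Let `H_I(x) = ∏ᵢ He_{Iᵢ}(xᵢ)` be the multivariate (probabilists') Hermite polynomials. Gaussian
integration by parts gives `E[p(w) He_m(w)] = E[p⁽ᵐ⁾(w)]`, so for multi-indices of the same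
degree `d ≥ 1` one has `E[w^I H_J(w)] = E[H_I(w) H_J(w)] = I! δ_{IJ}` and `E[H_I(w)] = 0`.
Hence `g = Σ v_I H_I` satisfies `Cov(q, g) = Var(g) = Σ v_I² I!`, and `Var(q - g) ≥ 0` gives
`Var(q) ≥ Σ v_I² I! ≥ Σ v_I² = 1 ≥ 1/d!`.
-/

open MeasureTheory ProbabilityTheory

open Polynomial
open scoped NNReal

lemma integrable_eval_gaussianReal (p : ℝ[X]) {μ : ℝ} {v : ℝ≥0} :
    Integrable (fun t => p.eval t) (gaussianReal μ v) := by
  have hmon (k : ℕ) : Integrable (fun t : ℝ => t ^ k) (gaussianReal μ v) :=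
    integrable_pow_of_mem_interior_integrableExpSet (by simp) k
  simp_rw [eval_eq_sum_range]
  exact integrable_finsetSum _ fun k _ => (hmon k).const_mul _

lemma integrable_gaussianPDFReal_mul_eval (p : ℝ[X]) :
    Integrable (fun t => gaussianPDFReal 0 1 t * p.eval t) := by
  have h := integrable_eval_gaussianReal p (μ := 0) (v := 1)
  rw [gaussianReal_of_var_ne_zero _ one_ne_zero,
    integrable_withDensity_iff_integrable_smul' (measurable_gaussianPDF 0 1)
      (ae_of_all _ fun _ => gaussianPDF_lt_top)] at h
  simpa [toReal_gaussianPDF] using h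

lemma hasDerivAt_gaussianPDFReal_zero_one (t : ℝ) :
    HasDerivAt (gaussianPDFReal 0 1) (-t * gaussianPDFReal 0 1 t) t := by
  have h := (((hasDerivAt_pow 2 t).fun_neg.div_const 2).exp).const_mul (√(2 * Real.pi))⁻¹
  simp only [gaussianPDFReal_def, sub_zero, NNReal.coe_one, mul_one]
  refine h.congr_deriv ?_
  ring

/-- Stein's identity `E[w p(w)] = E[p'(w)]`: integrate by parts against the density `φ`,
using `φ' = -t φ`. -/
theorem integral_eval_X_mul_sub_derivative (p : ℝ[X]) :
    ∫ t, (X * p - derivative p).eval t ∂gaussianReal 0 1 = 0 := by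
  have hderiv (t : ℝ) : HasDerivAt (fun t => gaussianPDFReal 0 1 t * p.eval t)
      (-(gaussianPDFReal 0 1 t * (X * p - derivative p).eval t)) t := by
    refine ((hasDerivAt_gaussianPDFReal_zero_one t).mul (p.hasDerivAt t)).congr_deriv ?_
    simp only [eval_sub, eval_mul, eval_X]
    ring
  rw [integral_gaussianReal_eq_integral_smul one_ne_zero]
  simpa [integral_neg] using integral_eq_zero_of_hasDerivAt_of_integrable hderiv
    (integrable_gaussianPDFReal_mul_eval _).neg (integrable_gaussianPDFReal_mul_eval p)

noncomputable def hermiteReal (m : ℕ) : ℝ[X] := (hermite m).map (Int.castRingHom ℝ)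

lemma hermiteReal_zero : hermiteReal 0 = 1 := by simp [hermiteReal]

lemma hermiteReal_succ (m : ℕ) :
    hermiteReal (m + 1) = X * hermiteReal m - derivative (hermiteReal m) := by
  simp [hermiteReal, hermite_succ, derivative_map]

lemma natDegree_hermiteReal (m : ℕ) : (hermiteReal m).natDegree = m := by
  rw [hermiteReal, (hermite_monic m).natDegree_map, natDegree_hermite]

lemma coeff_hermiteReal_self (m : ℕ) : (hermiteReal m).coeff m = 1 := by
  simp [hermiteReal, coeff_hermite_self]

lemma coeff_hermiteReal_of_lt {m k : ℕ} (h : m < k) : (hermiteReal m).coeff k = 0 := by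
  simp [hermiteReal, coeff_hermite_of_lt h]

/-- `X * · - derivative` is the adjoint of `derivative` in `L²(γ)` by Stein's identity, and it maps
`H_m` to `H_{m+1}`. -/
lemma integral_eval_mul_hermiteReal_succ (p : ℝ[X]) (m : ℕ) :
    ∫ t, (p * hermiteReal (m + 1)).eval t ∂gaussianReal 0 1 =
      ∫ t, (derivative p * hermiteReal m).eval t ∂gaussianReal 0 1 := by
  have h : p * hermiteReal (m + 1) = (X * (p * hermiteReal m) - derivative (p * hermiteReal m))
      + derivative p * hermiteReal m := by
    rw [hermiteReal_succ, derivative_mul]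
    ring
  simp only [h, eval_add]
  rw [integral_add (integrable_eval_gaussianReal _) (integrable_eval_gaussianReal _),
    integral_eval_X_mul_sub_derivative, zero_add]

theorem integral_eval_mul_hermiteReal (p : ℝ[X]) (m : ℕ) :
    ∫ t, (p * hermiteReal m).eval t ∂gaussianReal 0 1 =
      ∫ t, (derivative^[m] p).eval t ∂gaussianReal 0 1 := by
  induction m generalizing p with
  | zero => simp [hermiteReal_zero]
  | succ m ih => rw [integral_eval_mul_hermiteReal_succ, ih, Function.iterate_succ_apply]

theorem integral_eval_mul_hermiteReal_of_natDegree_le {p : ℝ[X]} {m : ℕ} (hp : p.natDegree ≤ m) :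
    ∫ t, (p * hermiteReal m).eval t ∂gaussianReal 0 1 = m.factorial * p.coeff m := by
  have hconst : derivative^[m] p = C ((m.factorial : ℝ) * p.coeff m) := by
    rw [eq_C_of_natDegree_le_zero ((natDegree_iterate_derivative p m).trans (by omega)),
      coeff_iterate_derivative, zero_add, Nat.descFactorial_self, nsmul_eq_mul]
  rw [integral_eval_mul_hermiteReal, hconst]
  simp

lemma integral_pow_mul_hermiteReal {k m : ℕ} (h : k ≤ m) :
    ∫ t, t ^ k * (hermiteReal m).eval t ∂gaussianReal 0 1 =
      if k = m then (m.factorial : ℝ) else 0 := by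
  have := integral_eval_mul_hermiteReal_of_natDegree_le ((natDegree_X_pow_le k).trans h)
  simp only [eval_mul, eval_pow, eval_X, coeff_X_pow] at this
  rw [this]
  rcases eq_or_ne k m with rfl | hkm
  · simp
  · simp [hkm, hkm.symm]

lemma integral_hermiteReal_mul_hermiteReal (a b : ℕ) :
    ∫ t, (hermiteReal a).eval t * (hermiteReal b).eval t ∂gaussianReal 0 1 =
      if a = b then (a.factorial : ℝ) else 0 := by
  have lower {a b : ℕ} (h : a ≤ b) :
      ∫ t, (hermiteReal a).eval t * (hermiteReal b).eval t ∂gaussianReal 0 1 =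
        b.factorial * (hermiteReal a).coeff b := by
    simpa using
      integral_eval_mul_hermiteReal_of_natDegree_le ((natDegree_hermiteReal a).trans_le h)
  rcases lt_trichotomy a b with hab | rfl | hab
  · rw [lower hab.le, coeff_hermiteReal_of_lt hab, if_neg hab.ne, mul_zero]
  · rw [lower le_rfl, coeff_hermiteReal_self, if_pos rfl, mul_one]
  · simp_rw [mul_comm ((hermiteReal a).eval _)]
    rw [lower hab.le, coeff_hermiteReal_of_lt hab, if_neg hab.ne', mul_zero]

lemma integral_hermiteReal {m : ℕ} (hm : m ≠ 0) :
    ∫ t, (hermiteReal m).eval t ∂gaussianReal 0 1 = 0 := by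
  simpa [hm.symm] using integral_pow_mul_hermiteReal (Nat.zero_le m)

section Multivariate

variable {ι : Type*} [Fintype ι]

noncomputable def hermitePi (I : ι → ℕ) (x : ι → ℝ) : ℝ := ∏ i, (hermiteReal (I i)).eval (x i)

lemma memLp_two_prod_eval (P : ι → ℝ[X]) :
    MemLp (fun x : ι → ℝ => ∏ i, (P i).eval (x i)) 2 (Measure.pi fun _ => gaussianReal 0 1) := by
  refine (memLp_two_iff_integrable_sq ?_).2 ?_
  · exact (continuous_finsetProd _ fun i _ =>
      (P i).continuous.comp (continuous_apply i)).aestronglyMeasurable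
  · simpa only [← Finset.prod_pow, ← eval_pow] using
      Integrable.fintype_prod fun i => integrable_eval_gaussianReal (P i ^ 2)

lemma memLp_two_monomial (I : ι → ℕ) :
    MemLp (fun x : ι → ℝ => ∏ i, x i ^ I i) 2 (Measure.pi fun _ => gaussianReal 0 1) := by
  simpa using memLp_two_prod_eval fun i => (X ^ I i : ℝ[X])

lemma memLp_two_hermitePi (I : ι → ℕ) :
    MemLp (hermitePi I) 2 (Measure.pi fun _ => gaussianReal 0 1) :=
  memLp_two_prod_eval fun i => hermiteReal (I i)

lemma exists_lt_of_sum_eq_of_ne {I J : ι → ℕ} (h : ∑ i, I i = ∑ i, J i) (hne : I ≠ J) :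
    ∃ i, I i < J i := by
  by_contra! hle
  exact hne (funext fun i => ((Finset.sum_eq_sum_iff_of_le fun i _ => hle i).1 h.symm i
    (Finset.mem_univ i)).symm)

lemma integral_monomial_mul_hermitePi {I J : ι → ℕ} (h : ∑ i, I i = ∑ i, J i) :
    ∫ x, (∏ i, x i ^ I i) * hermitePi J x ∂(Measure.pi fun _ => gaussianReal 0 1) =
      if I = J then ∏ i, ((I i).factorial : ℝ) else 0 := by
  simp only [hermitePi, ← Finset.prod_mul_distrib]
  rw [integral_fintype_prod_eq_prod (fun i t => t ^ I i * (hermiteReal (J i)).eval t)]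
  split_ifs with hIJ
  · subst hIJ
    exact Finset.prod_congr rfl fun i _ => by simp [integral_pow_mul_hermiteReal]
  · obtain ⟨i, hi⟩ := exists_lt_of_sum_eq_of_ne h hIJ
    exact Finset.prod_eq_zero (Finset.mem_univ i)
      (by simp [integral_pow_mul_hermiteReal hi.le, hi.ne])

lemma integral_hermitePi_mul_hermitePi (I J : ι → ℕ) :
    ∫ x, hermitePi I x * hermitePi J x ∂(Measure.pi fun _ => gaussianReal 0 1) =
      if I = J then ∏ i, ((I i).factorial : ℝ) else 0 := by
  simp only [hermitePi, ← Finset.prod_mul_distrib]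
  rw [integral_fintype_prod_eq_prod
    (fun i t => (hermiteReal (I i)).eval t * (hermiteReal (J i)).eval t)]
  simp only [integral_hermiteReal_mul_hermiteReal]
  split_ifs with hIJ
  · simp [hIJ]
  · obtain ⟨i, hi⟩ := Function.ne_iff.1 hIJ
    exact Finset.prod_eq_zero (Finset.mem_univ i) (if_neg hi)

lemma integral_hermitePi {I : ι → ℕ} (hI : I ≠ 0) :
    ∫ x, hermitePi I x ∂(Measure.pi fun _ => gaussianReal 0 1) = 0 := by
  obtain ⟨i, hi⟩ := Function.ne_iff.1 hI
  simp only [hermitePi]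
  rw [integral_fintype_prod_eq_prod (fun i t => (hermiteReal (I i)).eval t)]
  exact Finset.prod_eq_zero (Finset.mem_univ i) (integral_hermiteReal hi)

end Multivariate

section Projection

variable {Ω ι : Type*} [MeasurableSpace Ω] {μ : Measure Ω}

lemma integral_sum_mul_sum_of_biorthogonal [DecidableEq ι] {s : Finset ι} {f g : ι → Ω → ℝ}
    (hf : ∀ i ∈ s, MemLp (f i) 2 μ) (hg : ∀ i ∈ s, MemLp (g i) 2 μ) (c v : ι → ℝ)
    (horth : ∀ i ∈ s, ∀ j ∈ s, ∫ ω, f i ω * g j ω ∂μ = if i = j then c i else 0) :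
    ∫ ω, (∑ i ∈ s, v i * f i ω) * (∑ j ∈ s, v j * g j ω) ∂μ = ∑ i ∈ s, v i ^ 2 * c i := by
  have hterm (i j : ι) (ω : Ω) : v i * f i ω * (v j * g j ω) = v i * v j * (f i ω * g j ω) := by
    ring
  have hint : ∀ i ∈ s, ∀ j ∈ s, Integrable (fun ω => v i * v j * (f i ω * g j ω)) μ :=
    fun i hi j hj => ((hf i hi).integrable_mul (hg j hj)).const_mul _
  simp only [Finset.sum_mul_sum, hterm]
  rw [integral_finsetSum _ fun i hi => integrable_finsetSum _ (hint i hi)]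
  refine Finset.sum_congr rfl fun i hi => ?_
  rw [integral_finsetSum _ (hint i hi)]
  simp_rw [integral_const_mul]
  rw [Finset.sum_congr rfl fun j hj => by rw [horth i hi j hj], Finset.sum_eq_single_of_mem i hi]
  · simp [sq]
  · intro j _ hji
    simp [Ne.symm hji]

lemma variance_le_of_covariance_eq_variance [IsFiniteMeasure μ] {X Y : Ω → ℝ}
    (hX : MemLp X 2 μ) (hY : MemLp Y 2 μ) (h : cov[X, Y; μ] = Var[Y; μ]) :
    Var[Y; μ] ≤ Var[X; μ] := by
  have := variance_nonneg (X - Y) μ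
  rw [variance_sub hX hY, h] at this
  linarith

end Projection

theorem sum_sq_mul_factorial_le_variance {ι : Type*} [Fintype ι] {d : ℕ} (hd : d ≠ 0)
    {T : Finset (ι → ℕ)} (hT : ∀ I ∈ T, ∑ i, I i = d) (v : (ι → ℕ) → ℝ) :
    ∑ I ∈ T, v I ^ 2 * ∏ i, ((I i).factorial : ℝ) ≤
      Var[fun x => ∑ I ∈ T, v I * ∏ i, x i ^ I i; Measure.pi fun _ => gaussianReal 0 1] := by
  classical
  set μ : Measure (ι → ℝ) := Measure.pi fun _ => gaussianReal 0 1
  set q : (ι → ℝ) → ℝ := fun x => ∑ I ∈ T, v I * ∏ i, x i ^ I i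
  set g : (ι → ℝ) → ℝ := fun x => ∑ I ∈ T, v I * hermitePi I x
  have hq : MemLp q 2 μ := memLp_finsetSum T fun I _ => (memLp_two_monomial I).const_mul (v I)
  have hg : MemLp g 2 μ := memLp_finsetSum T fun I _ => (memLp_two_hermitePi I).const_mul (v I)
  have hg_mean : μ[g] = 0 := by
    rw [integral_finsetSum _ fun I _ => ((memLp_two_hermitePi I).integrable one_le_two).const_mul _]
    refine Finset.sum_eq_zero fun I hI => ?_
    have hI0 : I ≠ 0 := fun h => hd (by simpa [h] using (hT I hI).symm)
    rw [integral_const_mul, integral_hermitePi hI0, mul_zero]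
  have hcov : cov[q, g; μ] = ∑ I ∈ T, v I ^ 2 * ∏ i, ((I i).factorial : ℝ) := by
    rw [covariance_eq_sub hq hg, hg_mean, mul_zero, sub_zero]
    exact integral_sum_mul_sum_of_biorthogonal (fun I _ => memLp_two_monomial I)
      (fun I _ => memLp_two_hermitePi I) _ v fun I hI J hJ =>
        integral_monomial_mul_hermitePi ((hT I hI).trans (hT J hJ).symm)
  have hvar : Var[g; μ] = ∑ I ∈ T, v I ^ 2 * ∏ i, ((I i).factorial : ℝ) := by
    rw [← covariance_self hg.aemeasurable, covariance_eq_sub hg hg, hg_mean, mul_zero, sub_zero]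
    exact integral_sum_mul_sum_of_biorthogonal (fun I _ => memLp_two_hermitePi I)
      (fun I _ => memLp_two_hermitePi I) _ v fun I _ J _ => integral_hermitePi_mul_hermitePi I J
  rw [← hvar]
  exact variance_le_of_covariance_eq_variance hq hg (hcov.trans hvar.symm)

theorem stmt7_general (n d : ℕ) (hd : 1 ≤ d)
    (v : (Fin n → ℕ) → ℝ)
    (hv : ∑ I ∈ Finset.Nat.antidiagonalTuple n d, v I ^ 2 = 1) :
    (1 : ℝ) / d.factorial ≤
      variance
        (fun x : Fin n → ℝ =>
          ∑ I ∈ Finset.Nat.antidiagonalTuple n d, v I * ∏ i, x i ^ I i)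
        (stdGaussianPi n) := by
  have one_le_prod_factorial (I : Fin n → ℕ) : (1 : ℝ) ≤ ∏ i, ((I i).factorial : ℝ) := by
    exact_mod_cast Finset.one_le_prod' fun i _ => (I i).factorial_pos
  calc (1 : ℝ) / d.factorial ≤ 1 :=
        div_le_one_of_le₀ (by exact_mod_cast d.factorial_pos) (by positivity)
    _ = ∑ I ∈ Finset.Nat.antidiagonalTuple n d, v I ^ 2 := hv.symm
    _ ≤ ∑ I ∈ Finset.Nat.antidiagonalTuple n d, v I ^ 2 * ∏ i, ((I i).factorial : ℝ) :=
      Finset.sum_le_sum fun I _ => le_mul_of_one_le_right (sq_nonneg _) (one_le_prod_factorial I)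
    _ ≤ _ := sum_sq_mul_factorial_le_variance (by omega)
      (fun I hI => Finset.Nat.mem_antidiagonalTuple.1 hI) v

/-- the minimal eigenvalue of `Σ = Cov(w^{⊗d})` is at least `1/d!`.
Equivalently (expressing a unit vector of `Sym((ℝⁿ)^{⊗d})` in the orthonormal basis
`{e_I}_{I ∈ MI_n(d)}`): for every homogeneous degree-`d` polynomial
`q(x) = Σ_{I ∈ MI_n(d)} v_I x^I` with `Σ_I v_I² = 1`, one has
`Var(q(w)) = ⟨v, Σ v⟩ ≥ 1/d!` for `w` standard Gaussian in `ℝⁿ`. -/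
theorem stmt7 (n d : ℕ) (hn : 1 ≤ n) (hd : 1 ≤ d)
    (v : (Fin n → ℕ) → ℝ)
    (hv : ∑ I ∈ Finset.Nat.antidiagonalTuple n d, v I ^ 2 = 1) :
    (1 : ℝ) / d.factorial ≤
      variance
        (fun x : Fin n → ℝ =>
          ∑ I ∈ Finset.Nat.antidiagonalTuple n d, v I * ∏ i, x i ^ I i)
        (stdGaussianPi n) :=
  stmt7_general n d hd v hv
end

section
/- Let h_m denote the m-th normalized (probabilist's) Hermite polynomial, h_m(x) = ((−1)^m/√m!) e^{x²/2} (d^m/dx^m) e^{−x²/2}, and write h_m explicitly as h_m(x) = √m! Σ_{j=0}^{⌊m/2⌋} (−1)^j x^{m−2j}/(j!(m−2j)!2^j). Let p_d = Σ_{m=0}^d ĉ_m h_m with |ĉ_m| ≤ M for all m, and write p_d(x) = Σ_{m=0}^d a_m x^m in the monomial basis. Then |a_m| ≤ M · (2/√m!) · 2^d for every 0 ≤ m ≤ d. -/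
/-! The coefficient of `x^m` in `He_i` is `±(i-m-1)‼ · C(i,m)` (or `0`), and `((i-m-1)‼)² ≤ (i-m)!`
gives `coeff² · m! ≤ C(i,m) · i! ≤ C(i,m)² · i!`. Hence the `m`-th coefficient of `h_i = He_i / √i!`
is at most `C(i,m) / √m!` in absolute value, and summing over `i ≤ d` with the hockey-stick
identity `Σ_{i ≤ d} C(i,m) = C(d+1,m+1) ≤ 2^(d+1)` gives the bound. -/

/-- The `m`-th normalized (probabilist's) Hermite polynomial `h_m = He_m / √(m!)`,
so that `{h_m}` is orthonormal in `L²(γ)`. -/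
noncomputable def hermiteNorm (m : ℕ) : Polynomial ℝ :=
  (Real.sqrt m.factorial)⁻¹ • (Polynomial.hermite m).map (Int.castRingHom ℝ)

open Finset Polynomial
open scoped Nat

namespace Nat

theorem doubleFactorial_le_doubleFactorial_succ : ∀ n : ℕ, n‼ ≤ (n + 1)‼
  | 0 => le_rfl
  | 1 => by norm_num [Nat.doubleFactorial]
  | n + 2 => by
    rw [doubleFactorial_add_two, doubleFactorial_add_two (n + 1)]
    exact Nat.mul_le_mul (by omega) (doubleFactorial_le_doubleFactorial_succ n)

theorem doubleFactorial_pred_sq_le_factorial : ∀ n : ℕ, (n - 1)‼ ^ 2 ≤ n !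
  | 0 => le_rfl
  | n + 1 => by
    rw [factorial_eq_mul_doubleFactorial, Nat.add_sub_cancel, sq]
    exact Nat.mul_le_mul_right _ (doubleFactorial_le_doubleFactorial_succ n)

theorem sum_range_choose_eq_choose_succ (d m : ℕ) :
    ∑ i ∈ range (d + 1), i.choose m = (d + 1).choose (m + 1) := by
  induction d with
  | zero => simp [Nat.choose_succ_succ']
  | succ d ih => rw [sum_range_succ, ih, Nat.choose_succ_succ' (d + 1), add_comm]

end Nat

theorem coeff_hermite_sq_mul_factorial_le (n k : ℕ) :
    (hermite n).coeff k ^ 2 * k ! ≤ n.choose k * n ! := by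
  rcases Nat.even_or_odd (n + k) with heven | hodd
  · rcases le_or_gt k n with hkn | hnk
    · have hnat : (n - k - 1)‼ ^ 2 * n.choose k ^ 2 * k ! ≤ n.choose k * n ! :=
        calc (n - k - 1)‼ ^ 2 * n.choose k ^ 2 * k !
            ≤ (n - k)! * n.choose k ^ 2 * k ! := by
              gcongr; exact Nat.doubleFactorial_pred_sq_le_factorial _
          _ = n.choose k * (n.choose k * k ! * (n - k)!) := by ring
          _ = n.choose k * n ! := by rw [Nat.choose_mul_factorial_mul_factorial hkn]
      have hsign : ((-1 : ℤ) ^ ((n - k) / 2)) ^ 2 = 1 := by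
        rw [pow_right_comm, neg_one_sq, one_pow]
      rw [coeff_hermite_of_even_add heven]
      calc ((-1 : ℤ) ^ ((n - k) / 2) * (n - k - 1)‼ * n.choose k) ^ 2 * k !
          = ((n - k - 1)‼ ^ 2 * n.choose k ^ 2 * k ! : ℕ) := by
            push_cast; rw [mul_pow, mul_pow, hsign]; ring
        _ ≤ n.choose k * n ! := by exact_mod_cast hnat
    · rw [coeff_hermite_of_lt hnk, zero_pow two_ne_zero, zero_mul]; positivity
  · rw [coeff_hermite_of_odd_add hodd, zero_pow two_ne_zero, zero_mul]; positivity

theorem abs_coeff_hermiteNorm_le (n k : ℕ) :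
    |(hermiteNorm n).coeff k| ≤ n.choose k / Real.sqrt k ! := by
  have hsq : ((hermite n).coeff k : ℝ) ^ 2 * k ! ≤ (n.choose k : ℝ) ^ 2 * n ! :=
    calc ((hermite n).coeff k : ℝ) ^ 2 * k ! ≤ n.choose k * n ! := by
          exact_mod_cast coeff_hermite_sq_mul_factorial_le n k
      _ ≤ (n.choose k : ℝ) ^ 2 * n ! := by
          gcongr; exact_mod_cast Nat.le_self_pow two_ne_zero _
  have hmul : |((hermite n).coeff k : ℝ)| * Real.sqrt k ! ≤ n.choose k * Real.sqrt n ! := by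
    have := Real.sqrt_le_sqrt hsq
    rwa [Real.sqrt_mul (sq_nonneg _), Real.sqrt_mul (sq_nonneg _), Real.sqrt_sq_eq_abs,
      Real.sqrt_sq (Nat.cast_nonneg _)] at this
  have hcoeff : (hermiteNorm n).coeff k = (hermite n).coeff k / Real.sqrt n ! := by
    simp [hermiteNorm, div_eq_inv_mul]
  have hk : 0 < Real.sqrt k ! := Real.sqrt_pos.2 (by positivity)
  have hn : 0 < Real.sqrt n ! := Real.sqrt_pos.2 (by positivity)
  rwa [hcoeff, abs_div, abs_of_pos hn, div_le_div_iff₀ hn hk]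

/-- if `p_d = Σ_{m=0}^d ĉ_m h_m` with `|ĉ_m| ≤ M`, then the coefficients
`a_m` of `p_d` in the monomial basis satisfy `|a_m| ≤ M · (2/√(m!)) · 2^d`. -/
theorem stmt11 (d : ℕ) (M : ℝ) (c : ℕ → ℝ) (hc : ∀ m ≤ d, |c m| ≤ M) :
    ∀ m ≤ d,
      |(∑ i ∈ Finset.range (d + 1), c i • hermiteNorm i).coeff m|
        ≤ M * (2 / Real.sqrt m.factorial) * 2 ^ d := by
  intro m _
  have hM : 0 ≤ M := (abs_nonneg _).trans (hc 0 d.zero_le)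
  have hchoose : (∑ i ∈ range (d + 1), i.choose m : ℝ) ≤ 2 ^ (d + 1) := by
    exact_mod_cast (Nat.sum_range_choose_eq_choose_succ d m).trans_le (Nat.choose_le_two_pow _ _)
  rw [finsetSum_coeff]
  calc |∑ i ∈ range (d + 1), (c i • hermiteNorm i).coeff m|
      ≤ ∑ i ∈ range (d + 1), |c i| * |(hermiteNorm i).coeff m| := by
        simpa only [coeff_smul, smul_eq_mul, abs_mul] using
          abs_sum_le_sum_abs (fun i => (c i • hermiteNorm i).coeff m) (range (d + 1))
    _ ≤ ∑ i ∈ range (d + 1), M * (i.choose m / Real.sqrt m !) := by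
        gcongr with i hi
        · exact hc i (Nat.lt_succ_iff.1 (mem_range.1 hi))
        · exact abs_coeff_hermiteNorm_le i m
    _ = M / Real.sqrt m ! * ∑ i ∈ range (d + 1), (i.choose m : ℝ) := by
        rw [mul_sum]; congr 1 with i; ring
    _ ≤ M / Real.sqrt m ! * 2 ^ (d + 1) := by gcongr
    _ = M * (2 / Real.sqrt m.factorial) * 2 ^ d := by ring
end
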